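/- Let G be a split graph with split partition K ⊎ S and with no universal vertex, let s ∈ S, and let H = G^{N[s]}, K_s = N_G(s), K_o = K \ N_G(s). Then H satisfies condition (♯) (with respect to the clique N[s]) if and only if H is an interval graph admitting a clique path ⟨K_1,…,K_ℓ⟩ such that N_H(v) ∩ K_o ⊆ K_{lk(v)} ∪ K_{rk(v)} for every v ∈ K_s. -/

import Mathlib

/-!
As `G` has no universal vertex, `s` is universal in `H = G^{N[s]}`; a vertex `v ∈ K_s` is
adjacent in `H` to `u ∈ S \ {s}` exactly when `uv ∉ E(G)`, and then `N_H[u] ⊆ N_H[v]`.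

An interval model is turned into a clique path by sweeping the line from left to right: the
maximal cliques are the stabbing sets of the points `max_{w ∈ C} lo w`. If the model satisfies
(♯), a `K_o`-neighbour `u` of `v ∈ K_s` is adjacent to `v` in `G`, so the interval of `u` sticks
out of that of `v` at one end, and `u` lies in the first or the last clique of `v`.

Conversely, a clique path gives the interval model `v ↦ [lk v - ε v, rk v + ε v]` for any margins
`0 ≤ ε < 1/2`. Taking the margins of `s` and of `K_o` larger than those of `K_s` and `S \ {s}`,
the facts above and the condition on `N_H(v) ∩ K_o` turn into (♯).
-/

namespace CAG

variable {V : Type*}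

/-- The circle on which circular-arc models live. -/
abbrev Circle : Type := AddCircle (1 : ℝ)

/-- The closed arc of the circle starting at `s` and going a length `ℓ` in the
positive direction. -/
def circleArc (s ℓ : ℝ) : Set Circle :=
  (fun x : ℝ => (x : Circle)) '' Set.Icc s (s + ℓ)

/-- A circular-arc model of a graph `G`: an assignment of nonempty closed arcs of the
circle to vertices such that two distinct vertices are adjacent iff their arcs meet. -/
structure CircularArcModel (G : SimpleGraph V) where
  arc : V → Set Circle
  isArc : ∀ v : V, ∃ s ℓ : ℝ, 0 ≤ ℓ ∧ arc v = circleArc s ℓ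
  adj_iff : ∀ u v : V, u ≠ v → (G.Adj u v ↔ (arc u ∩ arc v).Nonempty)

/-- A graph is a circular-arc graph if it has a circular-arc model. -/
def IsCircularArcGraph (G : SimpleGraph V) : Prop := Nonempty (CircularArcModel G)

/-- An interval model of a graph `G`: an assignment of nonempty closed real intervals
to vertices such that two distinct vertices are adjacent iff their intervals meet. -/
structure IntervalModel (G : SimpleGraph V) where
  lo : V → ℝ
  hi : V → ℝ
  lo_le_hi : ∀ v : V, lo v ≤ hi v
  adj_iff : ∀ u v : V, u ≠ v →
    (G.Adj u v ↔ (Set.Icc (lo u) (hi u) ∩ Set.Icc (lo v) (hi v)).Nonempty)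

/-- The interval assigned to a vertex by an interval model. -/
def IntervalModel.ival {G : SimpleGraph V} (M : IntervalModel G) (v : V) : Set ℝ :=
  Set.Icc (M.lo v) (M.hi v)

/-- A graph is an interval graph if it has an interval model. -/
def IsIntervalGraph (G : SimpleGraph V) : Prop := Nonempty (IntervalModel G)

/-- The closed neighbourhood `N[v]` of a vertex. -/
def closedNbhd (G : SimpleGraph V) (v : V) : Set V := insert v (G.neighborSet v)

/-- A vertex is simplicial if its closed neighbourhood is a clique. -/
def IsSimplicial (G : SimpleGraph V) (v : V) : Prop := G.IsClique (closedNbhd G v)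

/-- The cycle graph on `n` vertices. -/
def cycleG (n : ℕ) : SimpleGraph (Fin n) :=
  SimpleGraph.fromRel (fun a b => (a.val + 1) % n = b.val)

/-- `G` contains an induced copy of `F`. -/
def InducedCopy {W : Type*} (F : SimpleGraph W) (G : SimpleGraph V) : Prop :=
  Nonempty (F ↪g G)

/-- A graph is chordal if it has no induced cycle of length at least 4. -/
def Chordal (G : SimpleGraph V) : Prop :=
  ∀ n : ℕ, 4 ≤ n → ¬ InducedCopy (cycleG n) G

/-- The adjacency relation of the auxiliary graph `G^K`. -/
def auxAdj (G : SimpleGraph V) (K : Set V) (u v : V) : Prop :=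
  (u ∈ K ∧ v ∈ K ∧ G.neighborSet u ∪ G.neighborSet v ≠ Set.univ) ∨
  (u ∉ K ∧ v ∉ K ∧ G.Adj u v) ∨
  (u ∈ K ∧ v ∉ K ∧ ¬ closedNbhd G v ⊆ closedNbhd G u) ∨
  (v ∈ K ∧ u ∉ K ∧ ¬ closedNbhd G u ⊆ closedNbhd G v)

/-- The auxiliary graph `G^K` associated with a graph `G` and a clique `K`. -/
def auxGraph (G : SimpleGraph V) (K : Set V) : SimpleGraph V where
  Adj u v := u ≠ v ∧ auxAdj G K u v
  symm := by
    constructor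
    rintro u v ⟨hne, h⟩
    refine ⟨hne.symm, ?_⟩
    rcases h with ⟨h1, h2, h3⟩ | ⟨h1, h2, h3⟩ | ⟨h1, h2, h3⟩ | ⟨h1, h2, h3⟩
    · exact Or.inl ⟨h2, h1, by rwa [Set.union_comm]⟩
    · exact Or.inr <| Or.inl ⟨h2, h1, h3.symm⟩
    · exact Or.inr <| Or.inr <| Or.inr ⟨h1, h2, h3⟩
    · exact Or.inr <| Or.inr <| Or.inl ⟨h1, h2, h3⟩
  loopless := ⟨fun _ h => h.1 rfl⟩

/-- Condition (♯): `G^K` admits an interval model in which, for every `v ∈ K` and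
`u ∉ K`, the interval of `v` contains the interval of `u` iff `u` and `v` are not
adjacent in `G`. -/
def SatisfiesSharp (G : SimpleGraph V) (K : Set V) : Prop :=
  ∃ M : IntervalModel (auxGraph G K),
    ∀ v ∈ K, ∀ u ∉ K, (M.ival u ⊆ M.ival v ↔ ¬ G.Adj v u)

/-- An independent set of a graph. -/
def IsIndependentSet (G : SimpleGraph V) (s : Set V) : Prop :=
  ∀ ⦃u⦄, u ∈ s → ∀ ⦃v⦄, v ∈ s → u ≠ v → ¬ G.Adj u v

/-- A split partition: a partition of the vertex set into a clique and an independent set. -/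
def IsSplitPartition (G : SimpleGraph V) (K S : Set V) : Prop :=
  K ∪ S = Set.univ ∧ Disjoint K S ∧ G.IsClique K ∧ IsIndependentSet G S

/-- A split graph. -/
def IsSplitGraph (G : SimpleGraph V) : Prop := ∃ K S : Set V, IsSplitPartition G K S

/-- A split graph is ambiguous if it has two distinct split partitions. -/
def Ambiguous (G : SimpleGraph V) : Prop :=
  ∃ K₁ S₁ K₂ S₂ : Set V, IsSplitPartition G K₁ S₁ ∧ IsSplitPartition G K₂ S₂ ∧
    (K₁, S₁) ≠ (K₂, S₂)

/-- A maximal clique (as a set of vertices). -/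
def IsMaxCliqueSet (G : SimpleGraph V) (C : Set V) : Prop :=
  G.IsClique C ∧ ∀ C' : Set V, G.IsClique C' → C ⊆ C' → C = C'

/-- A Helly circular-arc graph: one admitting a circular-arc model in which the arcs of
every maximal clique have a common point. -/
def IsHellyCircularArcGraph (G : SimpleGraph V) : Prop :=
  ∃ M : CircularArcModel G, ∀ C : Set V, IsMaxCliqueSet G C →
    ∃ p : Circle, ∀ v ∈ C, p ∈ M.arc v

/-- The edge `ab` lies on an induced 4-cycle. -/
def EdgeOnInducedC4 (G : SimpleGraph V) (a b : V) : Prop :=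
  ∃ c d : V, a ≠ c ∧ b ≠ d ∧ G.Adj a b ∧ G.Adj b c ∧ G.Adj c d ∧ G.Adj d a ∧
    ¬ G.Adj a c ∧ ¬ G.Adj b d

/-- A normalized circular-arc model. -/
def IsNormalized {G : SimpleGraph V} (M : CircularArcModel G) : Prop :=
  ∀ v₁ v₂ : V, G.Adj v₁ v₂ →
    (closedNbhd G v₂ ⊆ closedNbhd G v₁ → M.arc v₂ ⊆ M.arc v₁) ∧
    (G.neighborSet v₁ ∪ G.neighborSet v₂ = Set.univ → ¬ EdgeOnInducedC4 G v₁ v₂ →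
      M.arc v₁ ∪ M.arc v₂ = Set.univ)

/-- A universal vertex: a vertex adjacent to all other vertices. -/
def HasUniversalVertex (G : SimpleGraph V) : Prop :=
  ∃ v : V, ∀ u : V, u ≠ v → G.Adj v u

/-- `w` is a witness of the set `X ⊆ K`: a vertex of `S` adjacent in `G^K` to all of `X`. -/
def WitnessOf (G : SimpleGraph V) (K S : Set V) (w : V) (X : Set V) : Prop :=
  w ∈ S ∧ ∀ x ∈ X, (auxGraph G K).Adj w x

/-- A set `X` is witnessed if it has a witness. -/
def Witnessed (G : SimpleGraph V) (K S : Set V) (X : Set V) : Prop :=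
  ∃ w : V, WitnessOf G K S w X

/-- The induced subgraph of `G^K` on the vertex set `F` is witnessed: every maximal
clique of this subgraph that is disjoint from `S` is witnessed. -/
def WitnessedCopy (G : SimpleGraph V) (K S F : Set V) : Prop :=
  ∀ C ⊆ F, (auxGraph G K).IsClique C →
    (∀ C' ⊆ F, (auxGraph G K).IsClique C' → C ⊆ C' → C = C') →
    Disjoint C S → Witnessed G K S C

/-- The sun: a triangle 0,1,2 together with degree-two vertices 3 (adjacent to 0,1),
4 (adjacent to 1,2) and 5 (adjacent to 0,2). -/
def sunF : SimpleGraph (Fin 6) :=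
  SimpleGraph.fromRel (fun a b =>
    (a = 0 ∧ b = 1) ∨ (a = 0 ∧ b = 2) ∨ (a = 1 ∧ b = 2) ∨
    (a = 3 ∧ (b = 0 ∨ b = 1)) ∨ (a = 4 ∧ (b = 1 ∨ b = 2)) ∨ (a = 5 ∧ (b = 0 ∨ b = 2)))

/-- The long claw: centre 0 adjacent to 1,2,3; pendant vertices 4,5,6 attached to
1,2,3 respectively. -/
def longClaw : SimpleGraph (Fin 7) :=
  SimpleGraph.fromRel (fun a b =>
    (a = 0 ∧ (b = 1 ∨ b = 2 ∨ b = 3)) ∨ (a = 1 ∧ b = 4) ∨ (a = 2 ∧ b = 5) ∨ (a = 3 ∧ b = 6))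

/-- The whipping top, with vertices v0 = 0, v1 = 1, v2 = 2, v3 = 3, x1 = 4, x2 = 5,
x3 = 6: the path x1-v1-v2-v3-x3, with v0 adjacent to x1, v1, v2, v3, x3 and x2
adjacent exactly to v2. -/
def whippingTop : SimpleGraph (Fin 7) :=
  SimpleGraph.fromRel (fun a b =>
    (a = 4 ∧ b = 1) ∨ (a = 1 ∧ b = 2) ∨ (a = 2 ∧ b = 3) ∨ (a = 3 ∧ b = 6) ∨
    (a = 0 ∧ (b = 4 ∨ b = 1 ∨ b = 2 ∨ b = 3 ∨ b = 6)) ∨ (a = 5 ∧ b = 2))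

/-- The † graph on `p + 4` vertices: an induced path `v_1 … v_p` (the `inl` vertices),
a vertex `u0 = inr 0` adjacent to all `v_i`, and vertices `x1 = inr 1`, `x2 = inr 2`,
`x3 = inr 3` adjacent exactly to `v_1`, `u0`, `v_p` respectively. -/
def dagGraph (p : ℕ) : SimpleGraph (Fin p ⊕ Fin 4) :=
  SimpleGraph.fromRel (fun a b =>
    match a, b with
    | Sum.inl i, Sum.inl j => j.val = i.val + 1
    | Sum.inr u, Sum.inl j => u = 0 ∨ (u = 1 ∧ j.val = 0) ∨ (u = 3 ∧ j.val + 1 = p)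
    | Sum.inr u, Sum.inr w => u = 0 ∧ w = 2
    | _, _ => False)

/-- The ‡ graph on `p + 5` vertices: an induced path `v_1 … v_p` (the `inl` vertices),
adjacent vertices `u1 = inr 0` and `u2 = inr 1` each adjacent to all `v_i`, and
vertices `x1 = inr 2` (adjacent exactly to `v_1, u1`), `x2 = inr 3` (adjacent exactly
to `u1, u2`) and `x3 = inr 4` (adjacent exactly to `v_p, u2`). -/
def ddagGraph (p : ℕ) : SimpleGraph (Fin p ⊕ Fin 5) :=
  SimpleGraph.fromRel (fun a b =>
    match a, b with
    | Sum.inl i, Sum.inl j => j.val = i.val + 1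
    | Sum.inr u, Sum.inl j =>
        u = 0 ∨ u = 1 ∨ (u = 2 ∧ j.val = 0) ∨ (u = 4 ∧ j.val + 1 = p)
    | Sum.inr u, Sum.inr w =>
        (u = 0 ∧ w = 1) ∨ (u = 2 ∧ w = 0) ∨ (u = 3 ∧ (w = 0 ∨ w = 1)) ∨ (u = 4 ∧ w = 1)
    | _, _ => False)

/-- A graph is a minimal non-interval graph iff it is isomorphic to a hole, the long
claw, the whipping top, a † graph, or a ‡ graph. -/
def IsMinimalNonIntervalGraph {W : Type*} (F : SimpleGraph W) : Prop :=
  (∃ n : ℕ, 4 ≤ n ∧ Nonempty (F ≃g cycleG n)) ∨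
  Nonempty (F ≃g longClaw) ∨
  Nonempty (F ≃g whippingTop) ∨
  (∃ p : ℕ, 2 ≤ p ∧ Nonempty (F ≃g dagGraph p)) ∨
  (∃ p : ℕ, 1 ≤ p ∧ Nonempty (F ≃g ddagGraph p))

/-- The `k`-sun: the `inl` vertices form a clique (the even-numbered vertices of the
cycle of length `2k`), the `inr` vertices are independent, and `inr j` is adjacent to
`inl j` and `inl ((j+1) mod k)`. -/
def sunGraph (k : ℕ) : SimpleGraph (Fin k ⊕ Fin k) :=
  SimpleGraph.fromRel (fun a b =>
    match a, b with
    | Sum.inl _, Sum.inl _ => True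
    | Sum.inl i, Sum.inr j => i = j ∨ i.val = (j.val + 1) % k
    | _, _ => False)

/-- The graph `\overline{S_k}^+`: the complement of the `k`-sun together with a new
vertex (`none`) adjacent exactly to the `k` vertices forming a clique in the
complement (the `inr` vertices). -/
def sunComplPlus (k : ℕ) : SimpleGraph (Option (Fin k ⊕ Fin k)) :=
  SimpleGraph.fromRel (fun a b =>
    match a, b with
    | some x, some y => (sunGraph k)ᶜ.Adj x y
    | some (Sum.inr _), none => True
    | _, _ => False)

/-- The graph `S^1_k`: the disjoint union of a sun and the gadget `D_k`, with two
triangle vertices of the sun identified with `v_1` and `v_k` of the gadget, plus all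
edges between `{v_2, …, v_{k-1}}` and the four remaining sun vertices.  Here the
`inl` vertices are the gadget clique `v_1 … v_k` (0-based), `inr (inl a)` is the
gadget independent vertex `w_{a+1}`, and `inr (inr t)` for `t = 0,1,2,3` are the
third triangle vertex, and the three degree-two sun vertices adjacent (in the sun) to
`{v_1,v_k}`, `{v_1,t}`, `{v_k,t}` respectively. -/
def S1 (k : ℕ) : SimpleGraph (Fin k ⊕ (Fin (k - 1) ⊕ Fin 4)) :=
  SimpleGraph.fromRel (fun x y =>
    match x, y with
    | Sum.inl _, Sum.inl _ => True
    | Sum.inr (Sum.inl a), Sum.inl b => b.val ≠ a.val ∧ b.val ≠ a.val + 1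
    | Sum.inr (Sum.inr t), Sum.inl b =>
        t = 0 ∨ t = 1 ∨ (t = 2 ∧ b.val + 1 ≠ k) ∨ (t = 3 ∧ b.val ≠ 0)
    | Sum.inr (Sum.inr t), Sum.inr (Sum.inr t') => t = 0 ∧ (t' = 2 ∨ t' = 3)
    | _, _ => False)

/-- The graph `S^2_k`: the disjoint union of a rising sun and the gadget `D_k`, with
the two degree-five vertices of the rising sun identified with `v_1` and `v_k` of the
gadget, plus all edges between `{v_2, …, v_{k-1}}` and the five remaining rising-sun
vertices.  Here the `inl` vertices are the gadget clique `v_1 … v_k` (0-based),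
`inr (inl a)` is the gadget independent vertex `w_{a+1}`, and `inr (inr t)` for
`t = 0,…,4` are `d1`, `d2`, `x1`, `x2`, `x3` of the rising sun. -/
def S2 (k : ℕ) : SimpleGraph (Fin k ⊕ (Fin (k - 1) ⊕ Fin 5)) :=
  SimpleGraph.fromRel (fun x y =>
    match x, y with
    | Sum.inl _, Sum.inl _ => True
    | Sum.inr (Sum.inl a), Sum.inl b => b.val ≠ a.val ∧ b.val ≠ a.val + 1
    | Sum.inr (Sum.inr t), Sum.inl b =>
        t = 0 ∨ t = 1 ∨ (t = 2 ∧ b.val + 1 ≠ k) ∨ t = 3 ∨ (t = 4 ∧ b.val ≠ 0)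
    | Sum.inr (Sum.inr t), Sum.inr (Sum.inr t') =>
        (t = 0 ∧ t' = 1) ∨ (t = 0 ∧ t' = 2) ∨ (t = 1 ∧ t' = 4)
    | _, _ => False)

/-- The graph `F1` on 10 vertices: a clique `{0,1,2,3}` (= `v0,…,v3`), vertices
`x1 = 4, x2 = 5, x3 = 6` where `x_i` is adjacent exactly to `v0` and the two `v_j`
with `j ∈ {1,2,3} \ {i}`, and vertices `w1 = 7, w2 = 8, w3 = 9` where `w_i` is
adjacent exactly to the two `v_j` with `j ∈ {1,2,3} \ {i}`. -/
def F1 : SimpleGraph (Fin 10) :=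
  SimpleGraph.fromRel (fun a b =>
    (a.val < 4 ∧ b.val < 4) ∨
    (a = 4 ∧ (b = 0 ∨ b = 2 ∨ b = 3)) ∨
    (a = 5 ∧ (b = 0 ∨ b = 1 ∨ b = 3)) ∨
    (a = 6 ∧ (b = 0 ∨ b = 1 ∨ b = 2)) ∨
    (a = 7 ∧ (b = 2 ∨ b = 3)) ∨
    (a = 8 ∧ (b = 1 ∨ b = 3)) ∨
    (a = 9 ∧ (b = 1 ∨ b = 2)))

/-- The graph `F2` on 9 vertices: a clique `{0,1,2,3}` (= `v0,…,v3`) together with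
`x1 = 4` adjacent exactly to `v2, v3`; `x2 = 5` adjacent exactly to `v0, v1, v3`;
`x3 = 6` adjacent exactly to `v1, v2`; `w1 = 7` adjacent exactly to `v3`; and
`w2 = 8` adjacent exactly to `v1`. -/
def F2 : SimpleGraph (Fin 9) :=
  SimpleGraph.fromRel (fun a b =>
    (a.val < 4 ∧ b.val < 4) ∨
    (a = 4 ∧ (b = 2 ∨ b = 3)) ∨
    (a = 5 ∧ (b = 0 ∨ b = 1 ∨ b = 3)) ∨
    (a = 6 ∧ (b = 1 ∨ b = 2)) ∨
    (a = 7 ∧ b = 3) ∨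
    (a = 8 ∧ b = 1))

/-- The net plus an isolated vertex: triangle `0,1,2`, pendant vertices `3,4,5`
attached to `0,1,2` respectively, and an isolated vertex `6`. -/
def netStar : SimpleGraph (Fin 7) :=
  SimpleGraph.fromRel (fun a b =>
    (a = 0 ∧ b = 1) ∨ (a = 0 ∧ b = 2) ∨ (a = 1 ∧ b = 2) ∨
    (a = 3 ∧ b = 0) ∨ (a = 4 ∧ b = 1) ∨ (a = 5 ∧ b = 2))

/-- The graph `W`: the complement of the 4-sun — a clique `0,1,2,3` (= `v1,…,v4`)
plus an independent set `4,5,6,7` (= `u1,…,u4`) with `u_i` adjacent exactly to `v_i`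
and `v_{i+1 mod 4}` — together with a new vertex `8` adjacent exactly to `v1 = 0` and
`v3 = 2`. -/
def Wgraph : SimpleGraph (Fin 9) :=
  SimpleGraph.fromRel (fun a b =>
    (a.val < 4 ∧ b.val < 4) ∨
    (4 ≤ a.val ∧ a.val ≤ 7 ∧ (b.val = a.val - 4 ∨ b.val = (a.val - 4 + 1) % 4)) ∨
    (a = 8 ∧ (b = 0 ∨ b = 2)))

/-- A clique path of a graph `H`: a linear ordering `K_1, …, K_len` of all maximal
cliques of `H` such that for every vertex the cliques containing it are consecutive.
Indices outside `[1, len]` carry the empty set (sentinels). -/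
structure CliquePath (H : SimpleGraph V) where
  len : ℕ
  Kc : ℕ → Set V
  sentinel : ∀ i : ℕ, (i = 0 ∨ len < i) → Kc i = ∅
  maxclique : ∀ i : ℕ, 1 ≤ i → i ≤ len → IsMaxCliqueSet H (Kc i)
  surj : ∀ C : Set V, IsMaxCliqueSet H C → ∃ i, 1 ≤ i ∧ i ≤ len ∧ Kc i = C
  inj : ∀ i j : ℕ, 1 ≤ i → i ≤ len → 1 ≤ j → j ≤ len → Kc i = Kc j → i = j
  consec : ∀ (v : V) (i j k : ℕ), i ≤ j → j ≤ k → v ∈ Kc i → v ∈ Kc k → v ∈ Kc j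

/-- A module of a graph: every vertex outside is adjacent to all of it or none of it. -/
def GraphModule (H : SimpleGraph V) (M : Set V) : Prop :=
  ∀ u ∈ M, ∀ v ∈ M, ∀ x ∉ M, (H.Adj x u ↔ H.Adj x v)

/-- A graph is quasi-prime if every nontrivial module is a clique. -/
def QuasiPrime (H : SimpleGraph V) : Prop :=
  ∀ M : Set V, GraphModule H M → M ≠ Set.univ → ¬ M.Subsingleton → H.IsClique M



section MaxClique

variable {W : Type*} {H : SimpleGraph W} {C : Set W} {u v : W}

theorem exists_isMaxCliqueSet_superset [Finite W] (hC : H.IsClique C) :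
    ∃ D, IsMaxCliqueSet H D ∧ C ⊆ D := by
  obtain ⟨D, hCD, hmax⟩ := (Set.toFinite {D : Set W | H.IsClique D ∧ C ⊆ D}).exists_le_maximal
    (a := C) ⟨hC, subset_rfl⟩
  exact ⟨D, ⟨hmax.1.1, fun D' hD' hDD' => hmax.eq_of_le ⟨hD', hCD.trans hDD'⟩ hDD'⟩, hCD⟩

theorem IsMaxCliqueSet.mem_of_forall_adj (hC : IsMaxCliqueSet H C)
    (h : ∀ w ∈ C, w ≠ v → H.Adj v w) : v ∈ C := by
  rw [hC.2 (insert v C) (hC.1.insert fun w hw hne => h w hw hne.symm) (Set.subset_insert v C)]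
  exact Set.mem_insert v C

theorem IsMaxCliqueSet.mem_of_closedNbhd_subset (hC : IsMaxCliqueSet H C)
    (h : closedNbhd H u ⊆ closedNbhd H v) (hu : u ∈ C) : v ∈ C := by
  refine hC.mem_of_forall_adj fun w hw hwv => ?_
  have hw' : w ∈ closedNbhd H u := by
    rcases eq_or_ne w u with rfl | hwu
    · exact Set.mem_insert w _
    · exact Set.mem_insert_of_mem u (hC.1 hu hw hwu.symm)
  exact (Set.mem_insert_iff.1 (h hw')).resolve_left hwv

end MaxClique

namespace CliquePath

variable {W : Type*} {H : SimpleGraph W} (cp : CliquePath H)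

/-- The paper's `lk v`. For finite graphs every vertex lies in some `Kc m`
(`exists_mem_Kc`), so the junk values of `sInf ∅` and `sSup ∅` never occur. -/
noncomputable def lk (v : W) : ℕ := sInf {m | v ∈ cp.Kc m}

noncomputable def rk (v : W) : ℕ := sSup {m | v ∈ cp.Kc m}

variable {cp}

theorem mem_Icc_of_mem_Kc {v : W} {m : ℕ} (hm : v ∈ cp.Kc m) : m ∈ Set.Icc 1 cp.len := by
  by_contra h
  rw [cp.sentinel m (by grind)] at hm
  exact hm

theorem isMaxCliqueSet_Kc_of_mem {v : W} {m : ℕ} (hm : v ∈ cp.Kc m) :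
    IsMaxCliqueSet H (cp.Kc m) :=
  cp.maxclique m (mem_Icc_of_mem_Kc hm).1 (mem_Icc_of_mem_Kc hm).2

variable (cp)

theorem bddAbove_mem_Kc (v : W) : BddAbove {m | v ∈ cp.Kc m} :=
  ⟨cp.len, fun _ hm => (mem_Icc_of_mem_Kc hm).2⟩

variable [Finite W]

theorem exists_mem_Kc (v : W) : ∃ m, v ∈ cp.Kc m := by
  obtain ⟨D, hD, hvD⟩ :=
    exists_isMaxCliqueSet_superset (SimpleGraph.isClique_singleton (G := H) v)
  obtain ⟨m, -, -, rfl⟩ := cp.surj D hD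
  exact ⟨m, hvD rfl⟩

theorem mem_Kc_lk (v : W) : v ∈ cp.Kc (cp.lk v) := Nat.sInf_mem (cp.exists_mem_Kc v)

theorem mem_Kc_rk (v : W) : v ∈ cp.Kc (cp.rk v) :=
  Nat.sSup_mem (cp.exists_mem_Kc v) (cp.bddAbove_mem_Kc v)

theorem mem_Kc_iff {v : W} {m : ℕ} : v ∈ cp.Kc m ↔ cp.lk v ≤ m ∧ m ≤ cp.rk v :=
  ⟨fun hm => ⟨Nat.sInf_le hm, le_csSup (cp.bddAbove_mem_Kc v) hm⟩,
    fun ⟨h₁, h₂⟩ => cp.consec v _ m _ h₁ h₂ (cp.mem_Kc_lk v) (cp.mem_Kc_rk v)⟩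

theorem lk_le_rk (v : W) : cp.lk v ≤ cp.rk v := (cp.mem_Kc_iff.1 (cp.mem_Kc_lk v)).2

theorem one_le_lk (v : W) : 1 ≤ cp.lk v := (mem_Icc_of_mem_Kc (cp.mem_Kc_lk v)).1

theorem rk_le_len (v : W) : cp.rk v ≤ cp.len := (mem_Icc_of_mem_Kc (cp.mem_Kc_rk v)).2

theorem exists_lk_rk_iff (v : W) (P : ℕ → ℕ → Prop) :
    (∃ i j, 1 ≤ i ∧ j ≤ cp.len ∧ i ≤ j ∧ v ∈ cp.Kc i ∧ v ∈ cp.Kc j ∧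
      (∀ m, v ∈ cp.Kc m → i ≤ m ∧ m ≤ j) ∧ P i j) ↔ P (cp.lk v) (cp.rk v) := by
  constructor
  · rintro ⟨i, j, -, -, -, hi, hj, hmin, hP⟩
    obtain rfl : i = cp.lk v := le_antisymm (hmin _ (cp.mem_Kc_lk v)).1 (cp.mem_Kc_iff.1 hi).1
    obtain rfl : j = cp.rk v := le_antisymm (cp.mem_Kc_iff.1 hj).2 (hmin _ (cp.mem_Kc_rk v)).2
    exact hP
  · exact fun hP => ⟨_, _, cp.one_le_lk v, cp.rk_le_len v, cp.lk_le_rk v, cp.mem_Kc_lk v,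
      cp.mem_Kc_rk v, fun _ => cp.mem_Kc_iff.1, hP⟩

theorem adj_iff {u v : W} (huv : u ≠ v) :
    H.Adj u v ↔ cp.lk u ≤ cp.rk v ∧ cp.lk v ≤ cp.rk u := by
  constructor
  · intro hadj
    obtain ⟨D, hD, huvD⟩ := exists_isMaxCliqueSet_superset (H.isClique_pair.2 fun _ => hadj)
    obtain ⟨m, -, -, rfl⟩ := cp.surj D hD
    have hu := cp.mem_Kc_iff.1 (huvD (Set.mem_insert u _))
    have hv := cp.mem_Kc_iff.1 (huvD (Set.mem_insert_of_mem u rfl))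
    omega
  · intro h
    have hu : u ∈ cp.Kc (max (cp.lk u) (cp.lk v)) :=
      cp.mem_Kc_iff.2 ⟨le_max_left _ _, max_le (cp.lk_le_rk u) h.2⟩
    have hv : v ∈ cp.Kc (max (cp.lk u) (cp.lk v)) :=
      cp.mem_Kc_iff.2 ⟨le_max_right _ _, max_le h.1 (cp.lk_le_rk v)⟩
    exact (cp.isMaxCliqueSet_Kc_of_mem hu).1 hu hv huv

theorem lk_le_lk_and_rk_le_rk {u v : W} (h : closedNbhd H u ⊆ closedNbhd H v) :
    cp.lk v ≤ cp.lk u ∧ cp.rk u ≤ cp.rk v := by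
  have hlk := (cp.isMaxCliqueSet_Kc_of_mem (cp.mem_Kc_lk u)).mem_of_closedNbhd_subset h
    (cp.mem_Kc_lk u)
  have hrk := (cp.isMaxCliqueSet_Kc_of_mem (cp.mem_Kc_rk u)).mem_of_closedNbhd_subset h
    (cp.mem_Kc_rk u)
  exact ⟨(cp.mem_Kc_iff.1 hlk).1, (cp.mem_Kc_iff.1 hrk).2⟩

end CliquePath

namespace IntervalModel

variable {W : Type*} {H : SimpleGraph W} (M : IntervalModel H) {u v : W}

theorem ival_subset_ival_iff : M.ival u ⊆ M.ival v ↔ M.lo v ≤ M.lo u ∧ M.hi u ≤ M.hi v :=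
  Set.Icc_subset_Icc_iff (M.lo_le_hi u)

theorem adj_of_ival_subset (huv : u ≠ v) (h : M.ival u ⊆ M.ival v) : H.Adj u v :=
  have hu : M.lo u ∈ M.ival u := Set.left_mem_Icc.2 (M.lo_le_hi u)
  (M.adj_iff u v huv).2 ⟨M.lo u, hu, h hu⟩

theorem lo_le_hi_of_adj (h : H.Adj u v) : M.lo u ≤ M.hi v := by
  obtain ⟨x, hxu, hxv⟩ := (M.adj_iff u v h.ne).1 h
  exact hxu.1.trans hxv.2

noncomputable def cliquePoint (C : Set W) : ℝ := sSup (M.lo '' C)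

variable [Finite W]

theorem cliquePoint_mem_ival_iff {C : Set W} (hC : IsMaxCliqueSet H C) :
    M.cliquePoint C ∈ M.ival v ↔ v ∈ C := by
  have mem_of_mem : ∀ w ∈ C, M.cliquePoint C ∈ M.ival w := fun w hw =>
    ⟨le_csSup (Set.toFinite _).bddAbove ⟨w, hw, rfl⟩,
      csSup_le ⟨M.lo w, w, hw, rfl⟩ <| by
        rintro _ ⟨x, hx, rfl⟩
        rcases eq_or_ne x w with rfl | hxw
        · exact M.lo_le_hi x
        · exact M.lo_le_hi_of_adj (hC.1 hx hw hxw)⟩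
  refine ⟨fun hv => hC.mem_of_forall_adj fun w hw hwv => ?_, mem_of_mem v⟩
  exact (M.adj_iff v w hwv.symm).2 ⟨_, hv, mem_of_mem w hw⟩

noncomputable def cliquePoints : Finset ℝ :=
  (Set.toFinite (M.cliquePoint '' {C | IsMaxCliqueSet H C})).toFinset

/-- Indexed from `1`, as the cliques of a `CliquePath`; `0` outside `[1, #cliquePoints]`. -/
noncomputable def sortedPoint (i : ℕ) : ℝ :=
  if h : i ∈ Set.Icc 1 M.cliquePoints.card then
    M.cliquePoints.orderEmbOfFin rfl ⟨i - 1, by grind⟩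
  else 0

theorem strictMonoOn_sortedPoint :
    StrictMonoOn M.sortedPoint (Set.Icc 1 M.cliquePoints.card) := by
  intro i hi j hj hij
  simp only [sortedPoint, dif_pos hi, dif_pos hj]
  exact (M.cliquePoints.orderEmbOfFin rfl).strictMono (Fin.mk_lt_mk.2 (by grind))

theorem exists_sortedPoint_eq_cliquePoint {C : Set W} (hC : IsMaxCliqueSet H C) :
    ∃ i ∈ Set.Icc 1 M.cliquePoints.card, M.sortedPoint i = M.cliquePoint C := by
  have hmem : M.cliquePoint C ∈ Set.range (M.cliquePoints.orderEmbOfFin rfl) := by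
    rw [Finset.range_orderEmbOfFin, cliquePoints, Set.Finite.coe_toFinset]
    exact ⟨C, hC, rfl⟩
  obtain ⟨k, hk⟩ := hmem
  have hi : k.1 + 1 ∈ Set.Icc 1 M.cliquePoints.card := ⟨by omega, k.2⟩
  exact ⟨k.1 + 1, hi, by simp [sortedPoint, hk]⟩

theorem exists_cliquePoint_eq_sortedPoint {i : ℕ} (hi : i ∈ Set.Icc 1 M.cliquePoints.card) :
    ∃ C, IsMaxCliqueSet H C ∧ M.cliquePoint C = M.sortedPoint i := by
  have hmem : M.sortedPoint i ∈ (M.cliquePoints : Set ℝ) := by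
    simp only [sortedPoint, dif_pos hi]
    exact Finset.orderEmbOfFin_mem _ _ _
  rwa [cliquePoints, Set.Finite.coe_toFinset] at hmem

def cliqueAt (i : ℕ) : Set W :=
  {v | i ∈ Set.Icc 1 M.cliquePoints.card ∧ M.sortedPoint i ∈ M.ival v}

theorem cliqueAt_eq {C : Set W} (hC : IsMaxCliqueSet H C) {i : ℕ}
    (hi : i ∈ Set.Icc 1 M.cliquePoints.card) (hCi : M.cliquePoint C = M.sortedPoint i) :
    M.cliqueAt i = C := by
  ext v
  simp only [cliqueAt, Set.mem_ofPred_eq, ← hCi, M.cliquePoint_mem_ival_iff hC, hi, true_and]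

noncomputable def toCliquePath : CliquePath H where
  len := M.cliquePoints.card
  Kc := M.cliqueAt
  sentinel i hi := Set.eq_empty_of_forall_notMem fun v hv => by grind [cliqueAt]
  maxclique i h₁ h₂ := by
    obtain ⟨C, hC, hCi⟩ := M.exists_cliquePoint_eq_sortedPoint ⟨h₁, h₂⟩
    rwa [M.cliqueAt_eq hC ⟨h₁, h₂⟩ hCi]
  surj C hC := by
    obtain ⟨i, hi, hCi⟩ := M.exists_sortedPoint_eq_cliquePoint hC
    exact ⟨i, hi.1, hi.2, M.cliqueAt_eq hC hi hCi.symm⟩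
  inj i j hi₁ hi₂ hj₁ hj₂ hij := by
    obtain ⟨C, hC, hCi⟩ := M.exists_cliquePoint_eq_sortedPoint ⟨hi₁, hi₂⟩
    obtain ⟨D, hD, hDj⟩ := M.exists_cliquePoint_eq_sortedPoint ⟨hj₁, hj₂⟩
    have hCD : C = D := by
      rw [← M.cliqueAt_eq hC ⟨hi₁, hi₂⟩ hCi, ← M.cliqueAt_eq hD ⟨hj₁, hj₂⟩ hDj, hij]
    exact M.strictMonoOn_sortedPoint.injOn ⟨hi₁, hi₂⟩ ⟨hj₁, hj₂⟩ (by rw [← hCi, ← hDj, hCD])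
  consec v i j k hij hjk hvi hvk := by
    have hj : j ∈ Set.Icc 1 M.cliquePoints.card := ⟨hvi.1.1.trans hij, hjk.trans hvk.1.2⟩
    have mono := M.strictMonoOn_sortedPoint.monotoneOn
    exact ⟨hj, (hvi.2.1.trans (mono hvi.1 hj hij)), (mono hj hvk.1 hjk).trans hvk.2.2⟩

theorem mem_toCliquePath_Kc_lk_or_rk (huv : H.Adj u v) (h : ¬ M.ival u ⊆ M.ival v) :
    u ∈ M.toCliquePath.Kc (M.toCliquePath.lk v) ∪
      M.toCliquePath.Kc (M.toCliquePath.rk v) := by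
  set cp := M.toCliquePath
  have mono := M.strictMonoOn_sortedPoint.monotoneOn
  have hlu := cp.mem_Kc_lk u
  have hru := cp.mem_Kc_rk u
  have hlv := cp.mem_Kc_lk v
  have hrv := cp.mem_Kc_rk v
  obtain ⟨hur, hvr⟩ := (cp.adj_iff huv.ne).1 huv
  rw [M.ival_subset_ival_iff, not_and_or, not_le, not_le] at h
  rcases h with hlo | hhi
  · exact Or.inl ⟨hlv.1, (hlo.trans_le hlv.2.1).le, (mono hlv.1 hru.1 hvr).trans hru.2.2⟩
  · exact Or.inr ⟨hrv.1, hlu.2.1.trans (mono hlu.1 hrv.1 hur), hrv.2.2.trans hhi.le⟩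

end IntervalModel

theorem Nat.le_iff_cast_le_add {a b : ℕ} {x : ℝ} (hx₀ : 0 ≤ x) (hx₁ : x < 1) :
    a ≤ b ↔ (a : ℝ) ≤ b + x := by
  refine ⟨fun h => by linarith [(Nat.cast_le (α := ℝ)).2 h], fun h => ?_⟩
  by_contra hba
  have : (b : ℝ) + 1 ≤ a := by exact_mod_cast Nat.lt_of_not_le hba
  linarith

namespace CliquePath

variable {W : Type*} {H : SimpleGraph W} [Finite W] (cp : CliquePath H)

/-- Margins below `1/2` make two intervals meet exactly when the clique ranges
`[lk, rk]` overlap. -/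
@[simps]
noncomputable def toIntervalModel (ε : W → ℝ) (hε₀ : ∀ v, 0 ≤ ε v) (hε : ∀ v, ε v < 1 / 2) :
    IntervalModel H where
  lo v := cp.lk v - ε v
  hi v := cp.rk v + ε v
  lo_le_hi v := by linarith [hε₀ v, (Nat.cast_le (α := ℝ)).2 (cp.lk_le_rk v)]
  adj_iff u v huv := by
    rw [cp.adj_iff huv, Set.Icc_inter_Icc, Set.nonempty_Icc, sup_le_iff, le_inf_iff, le_inf_iff,
      Nat.le_iff_cast_le_add (add_nonneg (hε₀ u) (hε₀ v)) (by linarith [hε u, hε v]),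
      Nat.le_iff_cast_le_add (add_nonneg (hε₀ v) (hε₀ u)) (by linarith [hε u, hε v])]
    have hu := (Nat.cast_le (α := ℝ)).2 (cp.lk_le_rk u)
    have hv := (Nat.cast_le (α := ℝ)).2 (cp.lk_le_rk v)
    constructor
    · rintro ⟨h₁, h₂⟩
      refine ⟨⟨?_, ?_⟩, ?_, ?_⟩ <;> linarith [hε₀ u, hε₀ v]
    · rintro ⟨⟨-, h₁⟩, h₂, -⟩
      constructor <;> linarith

variable {ε : W → ℝ} {hε₀ : ∀ v, 0 ≤ ε v} {hε : ∀ v, ε v < 1 / 2} {u v : W}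

theorem toIntervalModel_ival_subset (h : closedNbhd H u ⊆ closedNbhd H v)
    (hεuv : ε u ≤ ε v) :
    (cp.toIntervalModel ε hε₀ hε).ival u ⊆ (cp.toIntervalModel ε hε₀ hε).ival v := by
  obtain ⟨hlk, hrk⟩ := cp.lk_le_lk_and_rk_le_rk h
  rw [IntervalModel.ival_subset_ival_iff, toIntervalModel_lo, toIntervalModel_lo,
    toIntervalModel_hi, toIntervalModel_hi]
  constructor <;> linarith [(Nat.cast_le (α := ℝ)).2 hlk, (Nat.cast_le (α := ℝ)).2 hrk]

theorem not_toIntervalModel_ival_subset (h : u ∈ cp.Kc (cp.lk v) ∪ cp.Kc (cp.rk v))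
    (hεvu : ε v < ε u) :
    ¬ (cp.toIntervalModel ε hε₀ hε).ival u ⊆ (cp.toIntervalModel ε hε₀ hε).ival v := by
  rw [IntervalModel.ival_subset_ival_iff, toIntervalModel_lo, toIntervalModel_lo,
    toIntervalModel_hi, toIntervalModel_hi]
  rintro ⟨hlo, hhi⟩
  rcases h with h | h
  · linarith [(Nat.cast_le (α := ℝ)).2 (cp.mem_Kc_iff.1 h).1]
  · linarith [(Nat.cast_le (α := ℝ)).2 (cp.mem_Kc_iff.1 h).2]

end CliquePath

section AuxGraph

variable {G : SimpleGraph V} {A : Set V} {u v : V}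

theorem mem_closedNbhd_iff : u ∈ closedNbhd G v ↔ u = v ∨ G.Adj v u := Iff.rfl

theorem self_mem_closedNbhd (v : V) : v ∈ closedNbhd G v := Set.mem_insert v _

theorem mem_closedNbhd_of_adj (h : G.Adj v u) : u ∈ closedNbhd G v := Set.mem_insert_of_mem v h

theorem auxGraph_adj_iff_of_mem_of_mem (hu : u ∈ A) (hv : v ∈ A) :
    (auxGraph G A).Adj u v ↔ u ≠ v ∧ G.neighborSet u ∪ G.neighborSet v ≠ Set.univ := by
  simp [auxGraph, auxAdj, hu, hv]

theorem auxGraph_adj_iff_of_notMem_of_notMem (hu : u ∉ A) (hv : v ∉ A) :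
    (auxGraph G A).Adj u v ↔ G.Adj u v := by
  simp only [auxGraph, auxAdj, hu, hv]
  grind [G.ne_of_adj]

theorem auxGraph_adj_iff_of_mem_of_notMem (hu : u ∈ A) (hv : v ∉ A) :
    (auxGraph G A).Adj u v ↔ ¬ closedNbhd G v ⊆ closedNbhd G u := by
  simp only [auxGraph, auxAdj, hu, hv]
  grind

end AuxGraph

namespace IsSplitPartition

variable {G : SimpleGraph V} {K S : Set V} {s u v : V}

theorem mem_or_mem (hKS : IsSplitPartition G K S) (v : V) : v ∈ K ∨ v ∈ S :=
  (hKS.1 ▸ Set.mem_univ v : v ∈ K ∪ S)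

theorem notMem_left (hKS : IsSplitPartition G K S) (hs : s ∈ S) : s ∉ K :=
  fun h => Set.disjoint_left.1 hKS.2.1 h hs

theorem not_adj_of_mem_right (hKS : IsSplitPartition G K S) (hu : u ∈ S) (hv : v ∈ S) :
    ¬ G.Adj u v :=
  fun h => hKS.2.2.2 hu hv h.ne h

theorem mem_left_of_adj (hKS : IsSplitPartition G K S) (hs : s ∈ S) (hv : G.Adj s v) : v ∈ K :=
  (hKS.mem_or_mem v).resolve_right fun h => hKS.not_adj_of_mem_right hs h hv

theorem adj_of_mem_left (hKS : IsSplitPartition G K S) (hu : u ∈ K) (hv : v ∈ K) (huv : u ≠ v) :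
    G.Adj u v :=
  hKS.2.2.1 hu hv huv

theorem closedNbhd_subset_closedNbhd_iff (hKS : IsSplitPartition G K S) (hu : u ∈ S)
    (hv : v ∈ K) :
    closedNbhd G u ⊆ closedNbhd G v ↔ G.Adj u v := by
  refine ⟨fun h => ?_, fun huv w hw => ?_⟩
  · rcases h (Set.mem_insert u _) with rfl | h
    · exact absurd hv (hKS.notMem_left hu)
    · exact h.symm
  · rcases eq_or_ne w v with rfl | hwv
    · exact Set.mem_insert w _
    rcases hw with rfl | hw
    · exact Set.mem_insert_of_mem v huv.symm
    · exact Set.mem_insert_of_mem v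
        (hKS.adj_of_mem_left hv (hKS.mem_left_of_adj hu hw) hwv.symm)

end IsSplitPartition

section SplitAuxGraph

variable {G : SimpleGraph V} {K S : Set V} {s u v : V}

theorem auxGraph_closedNbhd_adj_center (hKS : IsSplitPartition G K S)
    (hu : ¬ HasUniversalVertex G) (hs : s ∈ S) (hvs : v ≠ s) :
    (auxGraph G (closedNbhd G s)).Adj s v := by
  by_cases hv : v ∈ closedNbhd G s
  · have hsv : G.Adj s v := (mem_closedNbhd_iff.1 hv).resolve_left hvs
    refine (auxGraph_adj_iff_of_mem_of_mem (self_mem_closedNbhd s) hv).2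
      ⟨hvs.symm, fun huniv => hu ⟨v, fun w hwv => ?_⟩⟩
    rcases (huniv ▸ Set.mem_univ w : w ∈ G.neighborSet s ∪ G.neighborSet v) with hsw | hvw
    · exact hKS.adj_of_mem_left (hKS.mem_left_of_adj hs hsv) (hKS.mem_left_of_adj hs hsw)
        hwv.symm
    · exact hvw
  · exact (auxGraph_adj_iff_of_mem_of_notMem (self_mem_closedNbhd s) hv).2
      fun hsub => hv (hsub (Set.mem_insert v _))

theorem notMem_closedNbhd_of_mem_right (hKS : IsSplitPartition G K S) (hs : s ∈ S)
    (huS : u ∈ S) (hus : u ≠ s) : u ∉ closedNbhd G s := by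
  rintro (rfl | hsu)
  exacts [hus rfl, hKS.not_adj_of_mem_right hs huS hsu]

theorem auxGraph_closedNbhd_adj_iff (hKS : IsSplitPartition G K S) (hs : s ∈ S)
    (hsv : G.Adj s v) (huS : u ∈ S) (hus : u ≠ s) :
    (auxGraph G (closedNbhd G s)).Adj v u ↔ ¬ G.Adj v u := by
  rw [auxGraph_adj_iff_of_mem_of_notMem (mem_closedNbhd_of_adj hsv)
    (notMem_closedNbhd_of_mem_right hKS hs huS hus),
    hKS.closedNbhd_subset_closedNbhd_iff huS (hKS.mem_left_of_adj hs hsv), G.adj_comm]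

theorem closedNbhd_auxGraph_closedNbhd_subset (hKS : IsSplitPartition G K S) (hs : s ∈ S)
    (hsv : G.Adj s v) (huS : u ∈ S) (hus : u ≠ s) (hvu : ¬ G.Adj v u) :
    closedNbhd (auxGraph G (closedNbhd G s)) u ⊆ closedNbhd (auxGraph G (closedNbhd G s)) v := by
  have hv : v ∈ closedNbhd G s := mem_closedNbhd_of_adj hsv
  have hu : u ∉ closedNbhd G s := notMem_closedNbhd_of_mem_right hKS hs huS hus
  intro w hw
  rcases eq_or_ne w v with rfl | hwv
  · exact Set.mem_insert w _
  refine Set.mem_insert_of_mem v ?_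
  rcases hw with rfl | (huw : (auxGraph G (closedNbhd G s)).Adj u w)
  · exact (auxGraph_closedNbhd_adj_iff hKS hs hsv huS hus).2 hvu
  by_cases hw : w ∈ closedNbhd G s
  · have hwu : ¬ G.Adj w u := by
      rcases hKS.mem_or_mem w with hwK | hwS
      · have h := (auxGraph_adj_iff_of_mem_of_notMem hw hu).1 huw.symm
        rwa [hKS.closedNbhd_subset_closedNbhd_iff huS hwK, G.adj_comm] at h
      · exact hKS.not_adj_of_mem_right hwS huS
    refine (auxGraph_adj_iff_of_mem_of_mem hv hw).2 ⟨hwv.symm, fun huniv => ?_⟩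
    rcases (huniv ▸ Set.mem_univ u : u ∈ G.neighborSet v ∪ G.neighborSet w) with h | h
    exacts [hvu h, hwu h]
  · rw [auxGraph_adj_iff_of_notMem_of_notMem hu hw] at huw
    refine (auxGraph_adj_iff_of_mem_of_notMem hv hw).2 fun hsub => ?_
    rcases hsub (Set.mem_insert_of_mem w huw.symm) with rfl | hvu'
    exacts [hu hv, hvu hvu']

theorem satisfiesSharp_of_cliquePath [Finite V] (hKS : IsSplitPartition G K S)
    (hu : ¬ HasUniversalVertex G) (hs : s ∈ S) (cp : CliquePath (auxGraph G (closedNbhd G s)))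
    (hcp : ∀ v ∈ G.neighborSet s, ∀ u ∈ (auxGraph G (closedNbhd G s)).neighborSet v,
      u ∈ K \ G.neighborSet s → u ∈ cp.Kc (cp.lk v) ∪ cp.Kc (cp.rk v)) :
    SatisfiesSharp G (closedNbhd G s) := by
  classical
  -- `s` must contain every interval outside `N[s]`, and a `K_o`-neighbour of `v ∈ K_s`
  -- must stick out of the interval of `v`.
  let ε : V → ℝ := fun v => if v = s ∨ v ∈ K \ G.neighborSet s then 2 / 5 else 1 / 5
  have hε₀ : ∀ v, 0 ≤ ε v := fun v => by dsimp only [ε]; split_ifs <;> norm_num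
  have hε : ∀ v, ε v < 1 / 2 := fun v => by dsimp only [ε]; split_ifs <;> norm_num
  refine ⟨cp.toIntervalModel ε hε₀ hε, fun v hv u huN => ?_⟩
  have hvK (hsv : G.Adj s v) : v ∈ K := hKS.mem_left_of_adj hs hsv
  have hεKs (hsv : G.Adj s v) : ε v = 1 / 5 :=
    if_neg (by rintro (rfl | ⟨-, h⟩); exacts [hKS.notMem_left hs (hvK hsv), h hsv])
  rcases hv with rfl | hsv
  · refine iff_of_true (cp.toIntervalModel_ival_subset (fun w _ => ?_) ?_) fun h => huN (.inr h)
    · rcases eq_or_ne w v with rfl | hwv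
      exacts [Set.mem_insert w _, Set.mem_insert_of_mem _
        (auxGraph_closedNbhd_adj_center hKS hu hs hwv)]
    · rw [show ε v = 2 / 5 from if_pos (.inl rfl)]
      dsimp only [ε]; split_ifs <;> norm_num
  have huv : u ≠ v := fun h => huN (h ▸ .inr hsv)
  rcases hKS.mem_or_mem u with huK | huS
  · have huKo : u ∈ K \ G.neighborSet s := ⟨huK, fun h => huN (.inr h)⟩
    refine iff_of_false (fun hsub => ?_)
      (not_not_intro (hKS.adj_of_mem_left (hvK hsv) huK huv.symm))
    by_cases hvu : (auxGraph G (closedNbhd G s)).Adj v u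
    · refine cp.not_toIntervalModel_ival_subset (hcp v hsv u hvu huKo) ?_ hsub
      rw [hεKs hsv, show ε u = 2 / 5 from if_pos (.inr huKo)]
      norm_num
    · exact hvu ((cp.toIntervalModel ε hε₀ hε).adj_of_ival_subset huv hsub).symm
  · have hus : u ≠ s := fun h => huN (.inl h)
    by_cases hvu : G.Adj v u
    · refine iff_of_false (fun hsub => ?_) (not_not_intro hvu)
      exact (auxGraph_closedNbhd_adj_iff hKS hs hsv huS hus).1
        ((cp.toIntervalModel ε hε₀ hε).adj_of_ival_subset huv hsub).symm hvu
    · refine iff_of_true (cp.toIntervalModel_ival_subset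
        (closedNbhd_auxGraph_closedNbhd_subset hKS hs hsv huS hus hvu) ?_) hvu
      rw [hεKs hsv, show ε u = 1 / 5 from
        if_neg (by rintro (h | ⟨h, -⟩); exacts [hus h, hKS.notMem_left huS h])]

end SplitAuxGraph

/-- Let `G` be a split graph with split partition `K ⊎ S`, no
universal vertex, `s ∈ S`, and let `H = G^{N[s]}`, `K_s = N(s)`, `K_o = K \ N(s)`.
Then `H` satisfies condition (♯) iff `H` is an interval graph admitting a clique path
`⟨K_1, …, K_ℓ⟩` with `N_H(v) ∩ K_o ⊆ K_{lk(v)} ∪ K_{rk(v)}` for every `v ∈ K_s`. -/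
theorem statement17 {V : Type*} [Fintype V] (G : SimpleGraph V) (K S : Set V)
    (hKS : IsSplitPartition G K S) (hu : ¬ HasUniversalVertex G)
    (s : V) (hs : s ∈ S) :
    SatisfiesSharp G (closedNbhd G s) ↔
      (IsIntervalGraph (auxGraph G (closedNbhd G s)) ∧
        ∃ cp : CliquePath (auxGraph G (closedNbhd G s)),
          ∀ v ∈ G.neighborSet s, ∃ i j : ℕ,
            1 ≤ i ∧ j ≤ cp.len ∧ i ≤ j ∧
            v ∈ cp.Kc i ∧ v ∈ cp.Kc j ∧
            (∀ m : ℕ, v ∈ cp.Kc m → i ≤ m ∧ m ≤ j) ∧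
            (∀ u ∈ (auxGraph G (closedNbhd G s)).neighborSet v,
              u ∈ K \ G.neighborSet s → u ∈ cp.Kc i ∪ cp.Kc j)) := by
  constructor
  · rintro ⟨M, hM⟩
    refine ⟨⟨M⟩, M.toCliquePath, fun v hsv => (M.toCliquePath.exists_lk_rk_iff v _).2 ?_⟩
    rintro u (hvu : (auxGraph G (closedNbhd G s)).Adj v u) ⟨huK, hsu⟩
    have huN : u ∉ closedNbhd G s := by
      rintro (rfl | h)
      exacts [hKS.notMem_left hs huK, hsu h]
    have hGvu : G.Adj v u := hKS.adj_of_mem_left (hKS.mem_left_of_adj hs hsv) huK hvu.ne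
    exact M.mem_toCliquePath_Kc_lk_or_rk hvu.symm
      fun hsub => (hM v (mem_closedNbhd_of_adj hsv) u huN).1 hsub hGvu
  · rintro ⟨-, cp, hcp⟩
    exact satisfiesSharp_of_cliquePath hKS hu hs cp
      fun v hv => (cp.exists_lk_rk_iff v _).1 (hcp v hv)

end CAG
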